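/- Controller refinement theorem: Suppose (S₁,Σ₁) ≼_Q (S₂,Σ₂), i.e., Q is a feedback refinement relation from S₁ to S₂ and Σ₂ is an abstract specification associated with S₁, S₂, Q, Σ₁. If the controller C solves the abstract control problem (S₂,Σ₂), then the refined controller C ∘ Q solves the concrete control problem (S₁,Σ₁). -/

import Mathlib

structure Sys (Uin V X Y : Type) where
  init : Set X
  F : X → V → Set X
  H : X → Uin → Set (Y × V)

def Moore {Uin V X Y : Type} (S : Sys Uin V X Y) : Prop :=
  ∀ x u y v, (y, v) ∈ S.H x u → ∀ u', ∃ v', (y, v') ∈ S.H x u'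

/-- `S₁` is feedback composable with `S₂`. -/
def FC {V₁ X₁ Y₁ V₂ X₂ Y₂ : Type}
    (S₁ : Sys Y₂ V₁ X₁ Y₁) (S₂ : Sys Y₁ V₂ X₂ Y₂) : Prop :=
  Moore S₂ ∧
  ∀ x₁ x₂ y₁ y₂ v₁ v₂, (y₂, v₂) ∈ S₂.H x₂ y₁ → (y₁, v₁) ∈ S₁.H x₁ y₂ →
    S₂.F x₂ v₂ = ∅ → S₁.F x₁ v₁ = ∅

/-- The closed loop `S₁ × S₂`. -/
def closedLoop {V₁ X₁ Y₁ V₂ X₂ Y₂ : Type}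
    (S₁ : Sys Y₂ V₁ X₁ Y₁) (S₂ : Sys Y₁ V₂ X₂ Y₂) :
    Sys Unit (V₁ × V₂) (X₁ × X₂) (Y₁ × Y₂) where
  init := S₁.init ×ˢ S₂.init
  F := fun x v => (S₁.F x.1 v.1) ×ˢ (S₂.F x.2 v.2)
  H := fun x _ =>
    {p | (p.1.1, p.2.1) ∈ S₁.H x.1 p.1.2 ∧ (p.1.2, p.2.2) ∈ S₂.H x.2 p.1.1}

/-- `(u,v,x,y)` is a solution of `S` on `[0;T)`. -/
def Solution {Uin V X Y : Type} (S : Sys Uin V X Y) (T : ℕ∞)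
    (u : ℕ → Uin) (v : ℕ → V) (x : ℕ → X) (y : ℕ → Y) : Prop :=
  1 ≤ T ∧ x 0 ∈ S.init ∧
  (∀ t : ℕ, (t : ℕ∞) < T → (y t, v t) ∈ S.H (x t) (u t)) ∧
  (∀ t : ℕ, ((t + 1 : ℕ) : ℕ∞) < T → x (t + 1) ∈ S.F (x t) (v t))

/-- The behavior of `S` (infinitary completed trace semantics): input/output
pairs of solutions which are either infinite or end in blocking. -/
def Behavior {Uin V X Y : Type} (S : Sys Uin V X Y) :
    Set (ℕ∞ × (ℕ → Uin) × (ℕ → Y)) :=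
  {p | ∃ v x, Solution S p.1 p.2.1 v x p.2.2 ∧
    ∀ n : ℕ, p.1 = ((n + 1 : ℕ) : ℕ∞) → S.F (x n) (v n) = ∅}

/-- The simple system with transition `F`. -/
def simpleSys {X U : Type} (F : X → U → Set X) : Sys U U X X :=
  ⟨Set.univ, F, fun x u => {(x, u)}⟩

/-- The controller `C` solves the control problem `(S,Σ)` where `S` is the simple
system with transition `F`: `C` is feedback composable with `S` and the behavior
of the closed loop `C × S`, read at the terminals `(u,x)`, is contained in the
specification. -/
def Solves {X U Xc Vc : Type} (C : Sys X Vc Xc U) (F : X → U → Set X)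
    (Spec : Set (ℕ∞ × (ℕ → U) × (ℕ → X))) : Prop :=
  FC C (simpleSys F) ∧
  ∀ (T : ℕ∞) (yu : ℕ → U × X),
    (T, fun _ => (), yu) ∈ Behavior (closedLoop C (simpleSys F)) →
    (T, fun t => (yu t).1, fun t => (yu t).2) ∈ Spec

/-- The refined controller `C ∘ Q`: the quantizer `Q`, viewed as a static system,
preprocesses the state measurement fed to `C`. -/
def compQ {X₁ X₂ U Xc Vc : Type} (C : Sys X₂ Vc Xc U) (Q : X₁ → X₂ → Prop) :
    Sys X₁ Vc Xc U :=
  ⟨C.init, C.F, fun xc x₁ => {p | ∃ x₂, Q x₁ x₂ ∧ p ∈ C.H xc x₂}⟩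

/-- `Q` is a feedback refinement relation from the simple system `F₁` to the
simple system `F₂`. -/
def IsFRR {X₁ X₂ U : Type} (F₁ : X₁ → U → Set X₁) (F₂ : X₂ → U → Set X₂)
    (Q : X₁ → X₂ → Prop) : Prop :=
  (∀ x₁, ∃ x₂, Q x₁ x₂) ∧
  ∀ x₁ x₂, Q x₁ x₂ → ∀ u, (F₂ x₂ u).Nonempty →
    (F₁ x₁ u).Nonempty ∧ ∀ x₁' ∈ F₁ x₁ u, ∀ x₂', Q x₁' x₂' → x₂' ∈ F₂ x₂ u

/-- `Σ₂` is an abstract specification associated with `S₁`, `S₂`, `Q`, `Σ₁`. -/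
def AbstractSpec {X₁ X₂ U : Type} (Q : X₁ → X₂ → Prop)
    (Spec₁ : Set (ℕ∞ × (ℕ → U) × (ℕ → X₁)))
    (Spec₂ : Set (ℕ∞ × (ℕ → U) × (ℕ → X₂))) : Prop :=
  ∀ (T : ℕ∞) (u : ℕ → U) (x₂ : ℕ → X₂), (T, u, x₂) ∈ Spec₂ →
    ∀ x₁ : ℕ → X₁, (∀ t : ℕ, (t : ℕ∞) < T → Q (x₁ t) (x₂ t)) →
    (T, u, x₁) ∈ Spec₁
/-!
A closed-loop behavior of `(C ∘ Q) × S₁` is lifted to one of `C × S₂` by recording, at each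
time, the abstract state `x₂` that the quantizer handed to `C`. Consecutive abstract states are
then successors in `S₂` because `Q` is a feedback refinement relation, provided the abstract
successor set is nonempty; this is guaranteed since `C` is feedback composable with `S₂` and its
own state did move. So the lifted run lies in `Σ₂`, and `Σ₂` is an abstract specification.
-/

section

variable {X X₁ X₂ U Xc Vc : Type}

theorem simpleSys_moore (F : X → U → Set X) : Moore (simpleSys F) := by
  rintro x u y v h u'
  obtain ⟨rfl, -⟩ := Prod.mk.inj h
  exact ⟨u', rfl⟩

theorem mem_closedLoop_simpleSys_H {C : Sys X Vc Xc U} {F : X → U → Set X}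
    {x : Xc × X} {w : Unit} {p : (U × X) × (Vc × U)} :
    p ∈ (closedLoop C (simpleSys F)).H x w ↔
      (p.1.1, p.2.1) ∈ C.H x.1 x.2 ∧ p.1.2 = x.2 ∧ p.2.2 = p.1.1 := by
  obtain ⟨⟨yc, y⟩, vc, u⟩ := p
  simp only [closedLoop, simpleSys, Set.mem_ofPred_eq, Set.mem_singleton_iff, Prod.mk.injEq]
  constructor <;> rintro ⟨hC, rfl, rfl⟩ <;> exact ⟨hC, rfl, rfl⟩

theorem FC.F_eq_empty_of_simpleSys_F_eq_empty {C : Sys X Vc Xc U} {F : X → U → Set X}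
    (hC : FC C (simpleSys F)) {xc : Xc} {x : X} {u : U} {vc : Vc}
    (hH : (u, vc) ∈ C.H xc x) (hF : F x u = ∅) : C.F xc vc = ∅ :=
  hC.2 xc x u x vc u rfl hH hF

theorem exists_related_seq {α β : Type} {R : α → β → Prop} (hR : ∀ a, ∃ b, R a b)
    (a : ℕ → α) {T : ℕ∞} {P : ℕ → β → Prop} (h : ∀ t : ℕ, (t : ℕ∞) < T → ∃ b, R (a t) b ∧ P t b) :
    ∃ b : ℕ → β, (∀ t, R (a t) (b t)) ∧ ∀ t : ℕ, (t : ℕ∞) < T → P t (b t) := by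
  have hb (t : ℕ) : ∃ b, R (a t) b ∧ ((t : ℕ∞) < T → P t b) := by
    by_cases ht : (t : ℕ∞) < T
    · obtain ⟨b, hab, hP⟩ := h t ht
      exact ⟨b, hab, fun _ => hP⟩
    · obtain ⟨b, hab⟩ := hR (a t)
      exact ⟨b, hab, fun ht' => absurd ht' ht⟩
  choose b hRb hPb using hb
  exact ⟨b, hRb, hPb⟩

namespace IsFRR

variable {F₁ : X₁ → U → Set X₁} {F₂ : X₂ → U → Set X₂} {Q : X₁ → X₂ → Prop}
  {x₁ x₁' : X₁} {x₂ x₂' : X₂} {u : U}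

theorem eq_empty_of_eq_empty (hQ : IsFRR F₁ F₂ Q) (hx : Q x₁ x₂) (h : F₁ x₁ u = ∅) :
    F₂ x₂ u = ∅ := by
  by_contra hne
  exact Set.nonempty_iff_ne_empty.mp
    (hQ.2 x₁ x₂ hx u (Set.nonempty_iff_ne_empty.mpr hne)).1 h

theorem mem_of_mem (hQ : IsFRR F₁ F₂ Q) (hx : Q x₁ x₂) (hne : (F₂ x₂ u).Nonempty)
    (h : x₁' ∈ F₁ x₁ u) (hx' : Q x₁' x₂') : x₂' ∈ F₂ x₂ u :=
  (hQ.2 x₁ x₂ hx u hne).2 x₁' h x₂' hx'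

theorem fc_compQ {C : Sys X₂ Vc Xc U} (hQ : IsFRR F₁ F₂ Q) (hC : FC C (simpleSys F₂)) :
    FC (compQ C Q) (simpleSys F₁) := by
  refine ⟨simpleSys_moore F₁, ?_⟩
  rintro xc x₁ u _ vc _ h ⟨x₂, hx, hH⟩ hF₁
  obtain ⟨rfl, rfl⟩ := Prod.mk.inj h
  exact hC.F_eq_empty_of_simpleSys_F_eq_empty hH (hQ.eq_empty_of_eq_empty hx hF₁)

theorem exists_behavior_closedLoop {C : Sys X₂ Vc Xc U} (hQ : IsFRR F₁ F₂ Q)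
    (hC : FC C (simpleSys F₂)) {T : ℕ∞} {yu : ℕ → U × X₁}
    (h : (T, fun _ => (), yu) ∈ Behavior (closedLoop (compQ C Q) (simpleSys F₁))) :
    ∃ x₂ : ℕ → X₂, (∀ t : ℕ, (t : ℕ∞) < T → Q (yu t).2 (x₂ t)) ∧
      (T, fun _ => (), fun t => ((yu t).1, x₂ t)) ∈ Behavior (closedLoop C (simpleSys F₂)) := by
  obtain ⟨v, x, ⟨hT, hinit, hH, hF⟩, hblock⟩ := h
  have hH' := fun t ht => mem_closedLoop_simpleSys_H.mp (hH t ht)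
  obtain ⟨x₂, hQx, hCx⟩ := exists_related_seq hQ.1 (fun t => (x t).2)
    (P := fun t z => ((yu t).1, (v t).1) ∈ C.H (x t).1 z) fun t ht => (hH' t ht).1
  have hlt (t : ℕ) (ht : ((t + 1 : ℕ) : ℕ∞) < T) : (t : ℕ∞) < T :=
    lt_of_le_of_lt (by exact_mod_cast t.le_succ) ht
  have hne (t : ℕ) (ht : ((t + 1 : ℕ) : ℕ∞) < T) : (F₂ (x₂ t) (yu t).1).Nonempty := by
    refine Set.nonempty_iff_ne_empty.mpr fun hempty => ?_
    have hCF := hC.F_eq_empty_of_simpleSys_F_eq_empty (hCx t (hlt t ht)) hempty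
    exact Set.eq_empty_iff_forall_notMem.mp hCF _ (hF t ht).1
  have hstep (t : ℕ) (ht : ((t + 1 : ℕ) : ℕ∞) < T) : x₂ (t + 1) ∈ F₂ (x₂ t) (yu t).1 :=
    hQ.mem_of_mem (hQx t) (hne t ht) ((hH' t (hlt t ht)).2.2 ▸ (hF t ht).2) (hQx (t + 1))
  refine ⟨x₂, fun t ht => (hH' t ht).2.1 ▸ hQx t,
    ⟨fun t => ((v t).1, (yu t).1), fun t => ((x t).1, x₂ t),
      ⟨hT, ⟨hinit.1, trivial⟩, fun t ht => ⟨hCx t ht, rfl⟩, fun t ht => ⟨(hF t ht).1, hstep t ht⟩⟩,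
      fun n hn => ?_⟩⟩
  have hn' : (n : ℕ∞) < T := by
    change T = _ at hn
    exact hn ▸ by exact_mod_cast n.lt_succ_self
  have hu : (v n).2 = (yu n).1 := (hH' n hn').2.2
  have hblock_n := Set.prod_eq_empty_iff.mp (hblock n hn)
  refine Set.prod_eq_empty_iff.mpr (hblock_n.imp id fun h => ?_)
  exact hQ.eq_empty_of_eq_empty (u := (yu n).1) (hQx n) (hu ▸ h)

end IsFRR

end

theorem controller_refinement_general {X₁ X₂ U Xc Vc : Type}
    (F₁ : X₁ → U → Set X₁) (F₂ : X₂ → U → Set X₂) (Q : X₁ → X₂ → Prop)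
    (C : Sys X₂ Vc Xc U)
    (Spec₁ : Set (ℕ∞ × (ℕ → U) × (ℕ → X₁)))
    (Spec₂ : Set (ℕ∞ × (ℕ → U) × (ℕ → X₂)))
    (hQ : IsFRR F₁ F₂ Q) (hAbs : AbstractSpec Q Spec₁ Spec₂)
    (hsolve : Solves C F₂ Spec₂) :
    Solves (compQ C Q) F₁ Spec₁ := by
  obtain ⟨hC, hBehavior⟩ := hsolve
  refine ⟨hQ.fc_compQ hC, fun T yu h => ?_⟩
  obtain ⟨x₂, hQx, h₂⟩ := hQ.exists_behavior_closedLoop hC h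
  exact hAbs T _ _ (hBehavior T _ h₂) _ hQx

/-- controller refinement theorem.  If `(S₁,Σ₁) ≼_Q (S₂,Σ₂)` and the
abstract controller `C` solves `(S₂,Σ₂)`, then the refined controller `C ∘ Q`
solves `(S₁,Σ₁)`. -/
theorem controller_refinement {X₁ X₂ U Xc Vc : Type}
    (F₁ : X₁ → U → Set X₁) (F₂ : X₂ → U → Set X₂) (Q : X₁ → X₂ → Prop)
    (C : Sys X₂ Vc Xc U) (hCH : ∀ x u, (C.H x u).Nonempty)
    (Spec₁ : Set (ℕ∞ × (ℕ → U) × (ℕ → X₁)))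
    (Spec₂ : Set (ℕ∞ × (ℕ → U) × (ℕ → X₂)))
    (hQ : IsFRR F₁ F₂ Q) (hAbs : AbstractSpec Q Spec₁ Spec₂)
    (hsolve : Solves C F₂ Spec₂) :
    Solves (compQ C Q) F₁ Spec₁ :=
  controller_refinement_general F₁ F₂ Q C Spec₁ Spec₂ hQ hAbs hsolve
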